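/- arXiv:1410.3089 — 7 statements merged into one kernel-verified Lean document; each statement's English description precedes it below -/
import Mathlib

section
/- Let A be a finite local commutative ring and let F be a free submodule of A^n. Then F is a direct summand of A^n: there exists a submodule Q of A^n with F ⊕ Q = A^n such that Q is a free A-module, and moreover the quotient module A^n/F is a free A-module. -/
/-!
A finite local ring is Artinian, so its maximal ideal `𝔪` is nilpotent and some `t ≠ 0`
satisfies `t 𝔪 = 0`. Such a `t` kills `𝔪 A^n`, while in a free module `t • y = 0` forces every
coordinate of `y` into `𝔪`. Hence an element of `F` lying in `𝔪 A^n` already lies in `𝔪 F`,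
i.e. `k ⊗ F → k ⊗ A^n` is injective, and over a local ring this is the criterion for
`F ↪ A^n` to split with free cokernel.
-/

open IsLocalRing TensorProduct

theorem Ideal.exists_ne_zero_mul_eq_zero_of_isNilpotent {R : Type*} [CommSemiring R]
    [Nontrivial R] {I : Ideal R} (hI : IsNilpotent I) :
    ∃ t : R, t ≠ 0 ∧ ∀ s ∈ I, t * s = 0 := by
  obtain ⟨t, ht, ht0⟩ := Submodule.exists_mem_ne_zero_of_ne_bot (pow_pred_nilpotencyClass hI)
  refine ⟨t, ht0, fun s hs => ?_⟩
  have := Ideal.mul_mem_mul ht hs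
  rwa [← pow_succ, Nat.sub_add_cancel (pos_nilpotencyClass_iff.mpr hI),
    pow_nilpotencyClass hI] at this

theorem Submodule.smul_eq_zero_of_mem_smul {R M : Type*} [CommSemiring R] [AddCommMonoid M]
    [Module R M] {I : Ideal R} {N : Submodule R M} {t : R} (htI : ∀ s ∈ I, t * s = 0) {x : M}
    (hx : x ∈ I • N) : t • x = 0 :=
  smul_induction_on hx (fun s hs y _ => by rw [smul_smul, htI s hs, zero_smul])
    fun x y hx hy => by rw [smul_add, hx, hy, add_zero]

namespace IsLocalRing

variable {R M N : Type*} [CommRing R] [IsLocalRing R]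
  [AddCommGroup M] [Module R M] [AddCommGroup N] [Module R N]

theorem exists_ne_zero_mul_maximalIdeal_eq_zero [IsArtinianRing R] :
    ∃ t : R, t ≠ 0 ∧ ∀ s ∈ maximalIdeal R, t * s = 0 :=
  Ideal.exists_ne_zero_mul_eq_zero_of_isNilpotent <|
    (isArtinianRing_iff_isNilpotent_maximalIdeal R).mp inferInstance

theorem one_tmul_eq_zero_iff {x : M} :
    (1 : ResidueField R) ⊗ₜ[R] x = 0 ↔ x ∈ maximalIdeal R • (⊤ : Submodule R M) := by
  change (1 : R ⧸ maximalIdeal R) ⊗ₜ[R] x = 0 ↔ _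
  rw [← (quotTensorEquivQuotSMul M (maximalIdeal R)).map_eq_zero_iff,
    quotTensorEquivQuotSMul_mk_one_tmul, Submodule.Quotient.mk_eq_zero]

theorem mem_maximalIdeal_smul_top_of_smul_eq_zero [Module.Free R M] {t : R} (ht : t ≠ 0)
    {y : M} (hy : t • y = 0) : y ∈ maximalIdeal R • (⊤ : Submodule R M) := by
  let b := Module.Free.chooseBasis R M
  have hcoord : ∀ i, b.repr y i ∈ maximalIdeal R := fun i => by
    refine (mem_maximalIdeal _).mpr fun hu => ht ?_
    simpa [hu.mul_left_eq_zero] using congr(b.repr $hy i)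
  rw [← b.linearCombination_repr y, Finsupp.linearCombination_apply]
  exact Submodule.sum_mem _ fun i _ => Submodule.smul_mem_smul (hcoord i) trivial

theorem lTensor_residueField_injective_of_injective [Module.Free R M] {t : R} (ht : t ≠ 0)
    (htm : ∀ s ∈ maximalIdeal R, t * s = 0) {f : M →ₗ[R] N} (hf : Function.Injective f) :
    Function.Injective (f.lTensor (ResidueField R)) := by
  refine (injective_iff_map_eq_zero _).mpr fun x hx => ?_
  obtain ⟨y, rfl⟩ := TensorProduct.mk_surjective R M (ResidueField R) residue_surjective x
  rw [TensorProduct.mk_apply, LinearMap.lTensor_tmul, one_tmul_eq_zero_iff] at hx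
  have hty : t • y = 0 := hf <| by
    rw [map_smul, map_zero, Submodule.smul_eq_zero_of_mem_smul htm hx]
  exact one_tmul_eq_zero_iff.mpr (mem_maximalIdeal_smul_top_of_smul_eq_zero ht hty)

end IsLocalRing

/-- Let `A` be a finite local commutative ring and let `F` be a free
submodule of `A^n`. Then `F` is a direct summand of `A^n`: there is a submodule `Q`
with `F ⊕ Q = A^n` which is free, and moreover the quotient `A^n / F` is free. -/
theorem free_submodule_isComplemented_and_quotient_free
    {A : Type*} [CommRing A] [Fintype A] [IsLocalRing A] {n : ℕ}
    (F : Submodule A (Fin n → A)) (hF : Module.Free A F) :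
    (∃ Q : Submodule A (Fin n → A), IsCompl F Q ∧ Module.Free A Q) ∧
      Module.Free A ((Fin n → A) ⧸ F) := by
  obtain ⟨t, ht, htm⟩ := exists_ne_zero_mul_maximalIdeal_eq_zero (R := A)
  have hinj := lTensor_residueField_injective_of_injective ht htm F.injective_subtype
  have hquot : Module.Free A ((Fin n → A) ⧸ F) :=
    Module.free_of_lTensor_residueField_injective F.subtype F.mkQ F.mkQ_surjective
      (LinearMap.exact_subtype_mkQ F) hinj
  obtain ⟨p, hp⟩ := (split_injective_iff_lTensor_residueField_injective F.subtype).mpr hinj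
  have hcompl : IsCompl F (LinearMap.ker p) :=
    LinearMap.isCompl_of_proj fun x => LinearMap.congr_fun hp x
  exact ⟨⟨LinearMap.ker p, hcompl, .of_equiv (F.quotientEquivOfIsCompl _ hcompl)⟩, hquot⟩
end

section
/- Let A be a finite local commutative ring, let N be a free submodule of A^n, and let x ∈ A^n. Then x ∈ N if and only if f(x) = 0 for every f ∈ N°. Equivalently, N°° = N. -/
/-!
Over an Artinian local ring `A` the maximal ideal `𝔪` is an associated prime, say `𝔪 = ann a`.
If `v` lies in a free submodule `N ⊆ A^n` and in `𝔪 A^n`, then `a • v = 0`, so the coordinates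
of `v` in a basis of `N` lie in `𝔪`, i.e. `v ∈ 𝔪 N`. Thus `N ⊗ A/𝔪 → (A/𝔪)^n` is injective, and
by the local flatness criterion `A^n / N` is free. Linear forms on a projective quotient separate
the points outside `N` from `N`, which gives `N°° = N`.
-/

open IsLocalRing Module

theorem IsLocalRing.maximalIdeal_mem_associatedPrimes (R : Type*) [CommRing R]
    [IsArtinianRing R] [IsLocalRing R] : maximalIdeal R ∈ associatedPrimes R R := by
  obtain ⟨p, hp⟩ := associatedPrimes.nonempty R R
  have : p.IsPrime := hp.isPrime
  rwa [← IsLocalRing.eq_maximalIdeal (IsArtinianRing.isMaximal_of_isPrime p)]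

theorem Module.Free.mem_smul_top_of_smul_eq_zero {R F : Type*} [CommRing R] [AddCommGroup F]
    [Module R F] [Module.Free R F] {I : Ideal R} {a : R} (hI : ∀ b, b * a = 0 → b ∈ I)
    {v : F} (hv : a • v = 0) : v ∈ I • (⊤ : Submodule R F) := by
  let b := Module.Free.chooseBasis R F
  rw [← b.linearCombination_repr v, Finsupp.linearCombination_apply]
  refine Submodule.sum_mem _ fun i _ => Submodule.smul_mem_smul (hI _ ?_) trivial
  simpa [mul_comm] using congr(b.repr $hv i)

theorem LinearMap.lTensor_quotient_injective_of_comap_smul_top_le {R M N : Type*} [CommRing R]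
    [AddCommGroup M] [Module R M] [AddCommGroup N] [Module R N] {I : Ideal R} (f : M →ₗ[R] N)
    (hf : (I • ⊤ : Submodule R N).comap f ≤ I • ⊤) : Function.Injective (f.lTensor (R ⧸ I)) := by
  have hcomm : TensorProduct.quotTensorEquivQuotSMul N I ∘ₗ f.lTensor (R ⧸ I) =
      (I • ⊤ : Submodule R M).mapQ (I • ⊤) f (Submodule.smul_top_le_comap_smul_top I f) ∘ₗ
        TensorProduct.quotTensorEquivQuotSMul M I := by
    refine TensorProduct.ext' fun r x => ?_
    obtain ⟨r, rfl⟩ := Ideal.Quotient.mk_surjective r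
    simp
  have hmapQ : Function.Injective ((I • ⊤ : Submodule R M).mapQ (I • ⊤) f
      (Submodule.smul_top_le_comap_smul_top I f)) := by
    rw [← LinearMap.ker_eq_bot]
    exact Submodule.ker_liftQ_eq_bot _ _ _ (by rwa [LinearMap.ker_comp, Submodule.ker_mkQ])
  refine Function.Injective.of_comp (f := TensorProduct.quotTensorEquivQuotSMul N I) ?_
  rw [← LinearEquiv.coe_coe, ← LinearMap.coe_comp, hcomm, LinearMap.coe_comp]
  exact hmapQ.comp (LinearEquiv.injective _)

theorem IsLocalRing.comap_maximalIdeal_smul_top_le_of_injective {R F M : Type*} [CommRing R]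
    [IsArtinianRing R] [IsLocalRing R] [AddCommGroup F] [Module R F] [Module.Free R F]
    [AddCommGroup M] [Module R M] {f : F →ₗ[R] M} (hf : Function.Injective f) :
    (maximalIdeal R • ⊤ : Submodule R M).comap f ≤ maximalIdeal R • ⊤ := by
  obtain ⟨-, a, ha⟩ := isAssociatedPrime_iff.mp (maximalIdeal_mem_associatedPrimes R)
  have hann : ∀ b, b * a = 0 ↔ b ∈ maximalIdeal R := by
    simp [ha, Submodule.mem_colon_singleton]
  have hkill : maximalIdeal R • ⊤ ≤ Submodule.torsionBy R M a :=
    Submodule.smul_le.mpr fun r hr x _ => by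
      rw [Submodule.mem_torsionBy_iff, smul_comm, ← mul_smul, (hann r).mpr hr, zero_smul]
  intro v hv
  refine Module.Free.mem_smul_top_of_smul_eq_zero (fun b hb => (hann b).mp hb) (hf ?_)
  rw [map_smul, map_zero]
  exact (Submodule.mem_torsionBy_iff _ _).mp (hkill hv)

theorem Module.free_quotient_of_isArtinianRing {R M : Type*} [CommRing R] [IsArtinianRing R]
    [IsLocalRing R] [AddCommGroup M] [Module R M] [Module.Finite R M] [Module.Free R M]
    (N : Submodule R M) [Module.Free R N] : Module.Free R (M ⧸ N) :=
  Module.free_of_lTensor_residueField_injective N.subtype N.mkQ N.mkQ_surjective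
    (LinearMap.exact_subtype_mkQ N)
    (N.subtype.lTensor_quotient_injective_of_comap_smul_top_le
      (IsLocalRing.comap_maximalIdeal_smul_top_le_of_injective N.injective_subtype))

theorem Submodule.dualAnnihilator_dualCoannihilator_eq_of_projective {R M : Type*} [CommRing R]
    [AddCommGroup M] [Module R M] (p : Submodule R M) [Projective R (M ⧸ p)] :
    p.dualAnnihilator.dualCoannihilator = p := by
  refine le_antisymm (fun x hx => ?_) p.le_dualAnnihilator_dualCoannihilator
  by_contra hxp
  obtain ⟨f, hfx, hfp⟩ := p.exists_dual_map_eq_bot_of_notMem hxp inferInstance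
  refine hfx ((mem_dualCoannihilator x).mp hx f ((mem_dualAnnihilator f).mpr fun w hw => ?_))
  simpa [hfp] using mem_map_of_mem (f := f) hw

/-- Let `A` be a finite local commutative ring, `N` a free submodule of
`A^n`, and `x ∈ A^n`. Then `x ∈ N` iff `f x = 0` for every `f` in the orthogonal `N°`;
equivalently, the bi-orthogonal `N°°` equals `N`. -/
theorem mem_iff_forall_dualAnnihilator_eq_zero_of_isLocalRing
    {A : Type*} [CommRing A] [Fintype A] [IsLocalRing A] {n : ℕ}
    (N : Submodule A (Fin n → A)) (hN : Module.Free A N) :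
    (∀ x : Fin n → A, x ∈ N ↔ ∀ f ∈ N.dualAnnihilator, f x = 0) ∧
      N.dualAnnihilator.dualCoannihilator = N := by
  have := Module.free_quotient_of_isArtinianRing N
  have hbiorth := N.dualAnnihilator_dualCoannihilator_eq_of_projective
  exact ⟨fun x => by rw [← Submodule.mem_dualCoannihilator, hbiorth], hbiorth⟩
end

section
/- Let A be a finite commutative ring and let N be a free submodule of A^n. Then N°° = N. -/
/-!
A finite ring is Artinian, so every maximal ideal `m` is an associated prime of `A`: the simple
module `A ⧸ m` embeds into `A`. Hence every proper submodule of a finitely generated module is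
killed by a nonzero functional. Applied to the image of the restriction map `(A^n)* → N*`, this
shows that every functional on the free module `N` extends to `A^n` (a nonzero functional on `N*`
killing the image is evaluation at some `x ≠ 0` of `N`, and then every functional on `A^n`
vanishes at `x`). Extending a dual basis of `N` gives a retraction `A^n → N`, so `A^n ⧸ N` is
projective, and the functionals on a projective module separate its points.
-/

open Module

section Artinian

variable {A : Type*} [CommRing A] [IsArtinianRing A]

theorem Ideal.IsMaximal.exists_injective_quotient_linearMap {m : Ideal A} (hm : m.IsMaximal) :
    ∃ ι : A ⧸ m →ₗ[A] A, Function.Injective ι := by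
  have := hm.isPrime
  have hann : m ∈ (Module.annihilator A A).minimalPrimes :=
    IsArtinianRing.mem_minimalPrimes fun r hr => by
      rw [show r = 0 by simpa using Module.mem_annihilator.mp hr 1]
      exact m.zero_mem
  exact ((isAssociatedPrime_iff_exists_injective_linearMap m A).mp
    (Module.associatedPrimes.minimalPrimes_annihilator_subset_associatedPrimes A A hann)).2

variable {M : Type*} [AddCommGroup M] [Module A M]

theorem Submodule.dualAnnihilator_ne_bot_of_ne_top [Module.Finite A M] {W : Submodule A M}
    (hW : W ≠ ⊤) : W.dualAnnihilator ≠ ⊥ := by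
  obtain ⟨W', hW', hle⟩ := (eq_top_or_exists_le_coatom W).resolve_left hW
  have : IsSimpleModule A (M ⧸ W') := isSimpleModule_iff_isCoatom.mpr hW'
  obtain ⟨m, hm, ⟨e⟩⟩ := isSimpleModule_iff_quot_maximal.mp this
  obtain ⟨ι, hι⟩ := hm.exists_injective_quotient_linearMap
  obtain ⟨x, hx⟩ := SetLike.exists_of_lt hW'.lt_top
  refine (Submodule.ne_bot_iff _).mpr ⟨ι ∘ₗ e.toLinearMap ∘ₗ W'.mkQ, ?_, ?_⟩
  · refine (Submodule.mem_dualAnnihilator _).mpr fun w hw => ?_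
    simp [(Submodule.Quotient.mk_eq_zero W').mpr (hle hw)]
  · intro h
    have : ι (e (W'.mkQ x)) = 0 := LinearMap.congr_fun h x
    simp [hι.eq_iff' (map_zero ι)] at this
    exact hx.2 this

theorem LinearMap.dualMap_surjective_of_injective_of_isArtinianRing {F : Type*} [AddCommGroup F]
    [Module A F] [Module.Finite A F] [Projective A F] [Projective A M] {φ : F →ₗ[A] M}
    (hφ : Function.Injective φ) : Function.Surjective φ.dualMap := by
  rw [← LinearMap.range_eq_top]
  by_contra hne
  obtain ⟨Ψ, hΨ, hΨ0⟩ := (Submodule.ne_bot_iff _).mp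
    (Submodule.dualAnnihilator_ne_bot_of_ne_top hne)
  obtain ⟨x, rfl⟩ := (evalEquiv A F).surjective Ψ
  have hφx : φ x = 0 := (forall_dual_apply_eq_zero_iff A (φ x)).mp fun f =>
    (Submodule.mem_dualAnnihilator _).mp hΨ _ ⟨f, rfl⟩
  exact hΨ0 (by simp [hφ.eq_iff' (map_zero φ) |>.mp hφx])

end Artinian

section Retraction

variable {A M : Type*} [CommRing A] [AddCommGroup M] [Module A M]

theorem LinearMap.exists_leftInverse_of_dualMap_surjective {F : Type*} [AddCommGroup F]
    [Module A F] [Free A F] [Module.Finite A F] {φ : F →ₗ[A] M}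
    (hφ : Function.Surjective φ.dualMap) : ∃ r : M →ₗ[A] F, r ∘ₗ φ = LinearMap.id := by
  let b := Free.chooseBasis A F
  choose G hG using fun i => hφ (b.coord i)
  refine ⟨b.equivFun.symm.toLinearMap ∘ₗ LinearMap.pi G, LinearMap.ext fun x => ?_⟩
  have hGx : (fun i => G i (φ x)) = b.equivFun x := funext fun i => LinearMap.congr_fun (hG i) x
  change b.equivFun.symm (fun i => G i (φ x)) = x
  rw [hGx, b.equivFun.symm_apply_apply]

theorem Submodule.projective_quotient_of_leftInverse [Projective A M] {N : Submodule A M}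
    {r : M →ₗ[A] N} (hr : r ∘ₗ N.subtype = LinearMap.id) : Projective A (M ⧸ N) := by
  have hc : IsCompl N (LinearMap.ker r) :=
    LinearMap.isCompl_of_proj fun x => LinearMap.congr_fun hr x
  have : Projective A (LinearMap.ker r) :=
    .of_split (LinearMap.ker r).subtype _ (Submodule.projectionOnto_comp_subtype hc.symm)
  exact .of_equiv (Submodule.quotientEquivOfIsCompl N _ hc).symm

theorem Submodule.dualAnnihilator_dualCoannihilator_eq_of_projective_s3 {N : Submodule A M}
    [Projective A (M ⧸ N)] : N.dualAnnihilator.dualCoannihilator = N := by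
  refine le_antisymm (fun x hx => ?_) N.le_dualAnnihilator_dualCoannihilator
  by_contra hxN
  obtain ⟨f, hfx, hf⟩ := Submodule.exists_dual_map_eq_bot_of_notMem hxN inferInstance
  refine hfx ((Submodule.mem_dualCoannihilator x).mp hx f ?_)
  exact (Submodule.mem_dualAnnihilator f).mpr fun w hw => by
    simpa [hf] using Submodule.mem_map_of_mem (f := f) hw

theorem Submodule.dualAnnihilator_dualCoannihilator_eq_of_free [IsArtinianRing A]
    [Projective A M] (N : Submodule A M) [Free A N] [Module.Finite A N] :
    N.dualAnnihilator.dualCoannihilator = N := by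
  obtain ⟨r, hr⟩ := LinearMap.exists_leftInverse_of_dualMap_surjective
    (LinearMap.dualMap_surjective_of_injective_of_isArtinianRing N.injective_subtype)
  have := Submodule.projective_quotient_of_leftInverse hr
  exact Submodule.dualAnnihilator_dualCoannihilator_eq_of_projective_s3

end Retraction

/-- Let `A` be a finite commutative ring and `N` a free submodule of
`A^n`. Then the bi-orthogonal `N°°` equals `N`. -/
theorem dualCoannihilator_dualAnnihilator_of_free
    {A : Type*} [CommRing A] [Fintype A] {n : ℕ}
    (N : Submodule A (Fin n → A)) (hN : Module.Free A N) :
    N.dualAnnihilator.dualCoannihilator = N :=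
  N.dualAnnihilator_dualCoannihilator_eq_of_free
end

section
/- Let A be a finite local commutative ring and let C be a free submodule of A^n of rank k (an (n,k)-linear code over A). Then the dual code C^⊥ is a free A-module of rank n − k. -/
/-- The dual code `C^⊥ = {y : ⟨x,y⟩ = 0 for all x ∈ C}` of a linear code `C ⊆ A^ι`
with respect to the standard bilinear form `⟨x,y⟩ = ∑ i, x i * y i`. -/
def dualCode {A : Type*} [CommRing A] {ι : Type*} [Fintype ι]
    (C : Submodule A (ι → A)) : Submodule A (ι → A) where
  carrier := {y | ∀ x ∈ C, ∑ i, x i * y i = 0}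
  add_mem' := by
    intro a b ha hb x hx
    simp only [Set.mem_setOf_eq] at ha hb ⊢
    simp [Pi.add_apply, mul_add, Finset.sum_add_distrib, ha x hx, hb x hx]
  zero_mem' := by intro x hx; simp
  smul_mem' := by
    intro c y hy x hx
    simp only [Set.mem_setOf_eq] at hy ⊢
    simp only [Pi.smul_apply, smul_eq_mul, mul_left_comm, ← Finset.mul_sum, hy x hx,
      mul_zero]

/-!
The rows of a generator matrix `G` of `C` form a basis of `C`, and `C^⊥` is the kernel of
`y ↦ G *ᵥ y : A^n → A^k`. As `A` is Artinian local, some `a ≠ 0` annihilates the maximal ideal `𝔪`;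
multiplying a relation among the rows of `G` modulo `𝔪` by `a` yields a relation over `A`, so the
rows stay linearly independent over the residue field. Hence `G` has a right inverse modulo `𝔪`,
and `G` times any lift of it is `≡ 1 mod 𝔪`, hence invertible; so `y ↦ G *ᵥ y` splits. Its
kernel is then a direct summand of `A^n`, hence projective, hence free over the local ring `A`,
of rank `n - k`.
-/

open IsLocalRing Matrix Module

theorem IsLocalRing.annihilator_maximalIdeal_ne_bot {A : Type*} [CommRing A] [IsLocalRing A]
    [IsArtinianRing A] : (maximalIdeal A).annihilator ≠ ⊥ := by
  -- `𝔪`, the only prime of `A`, is an associated prime of `A`: the annihilator of some `x`.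
  obtain ⟨P, hP⟩ := associatedPrimes.nonempty A A
  obtain ⟨hprime, x, hPx⟩ := isAssociatedPrime_iff.mp hP
  have hPm : P = maximalIdeal A :=
    eq_maximalIdeal (IsArtinianRing.isMaximal_of_isPrime P)
  have hx : x ≠ 0 := by
    rintro rfl
    exact hprime.ne_top (by simp [hPx])
  refine (Submodule.ne_bot_iff _).mpr ⟨x, ?_, hx⟩
  rw [Submodule.mem_annihilator]
  intro y hy
  rw [← hPm, hPx, Submodule.mem_colon_singleton] at hy
  simpa [mul_comm] using hy

theorem IsLocalRing.linearIndependent_residue_comp {A : Type*} [CommRing A] [IsLocalRing A]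
    [IsArtinianRing A] {ι σ : Type*} [Fintype ι] {v : ι → σ → A} (hv : LinearIndependent A v) :
    LinearIndependent (ResidueField A) fun i ↦ residue A ∘ v i := by
  obtain ⟨a, ha, ha0⟩ :=
    Submodule.exists_mem_ne_zero_of_ne_bot (annihilator_maximalIdeal_ne_bot (A := A))
  rw [Submodule.mem_annihilator] at ha
  rw [Fintype.linearIndependent_iff] at hv ⊢
  intro c hc i
  choose c' hc' using fun j ↦ residue_surjective (c j)
  have hmem : ∀ s, ∑ j, c' j * v j s ∈ maximalIdeal A := fun s ↦ by
    rw [← residue_eq_zero_iff, map_sum]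
    simpa [hc', Finset.sum_apply] using congrFun hc s
  have hac : a * c' i = 0 := by
    refine hv (fun j ↦ a * c' j) (funext fun s ↦ ?_) i
    simp only [Finset.sum_apply, Pi.smul_apply, smul_eq_mul, Pi.zero_apply]
    rw [← ha _ (hmem s), smul_eq_mul, Finset.mul_sum]
    exact Finset.sum_congr rfl fun j _ ↦ by ring
  rw [← hc' i, residue_eq_zero_iff]
  exact fun hu ↦ ha0 (by simpa [hu.mul_left_eq_zero] using hac)

theorem Matrix.exists_mul_eq_one_of_linearIndependent_row {K m n : Type*} [Field K] [Fintype m]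
    [DecidableEq m] [Fintype n] {M : Matrix m n K} (h : LinearIndependent K M.row) :
    ∃ B : Matrix n m K, M * B = 1 := by
  rw [← mulVec_surjective_iff_exists_right_inverse]
  have hrange : LinearMap.range M.mulVecLin = ⊤ := by
    apply Submodule.eq_top_of_finrank_eq
    rw [Module.finrank_fintype_fun_eq_card, ← h.rank_matrix]
    rfl
  exact LinearMap.range_eq_top.mp hrange

theorem Matrix.exists_mul_eq_one_of_map_residue {A m n : Type*} [CommRing A] [IsLocalRing A]
    [Fintype m] [DecidableEq m] [Fintype n] {G : Matrix m n A}
    (h : ∃ B : Matrix n m (ResidueField A), G.map (residue A) * B = 1) :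
    ∃ H : Matrix n m A, G * H = 1 := by
  obtain ⟨B, hB⟩ := h
  set H₀ := B.map (Function.surjInv residue_surjective)
  have hH₀ : H₀.map (residue A) = B := by
    ext i j
    exact Function.surjInv_eq residue_surjective _
  have hunit : IsUnit (G * H₀).det := by
    rw [← residue_ne_zero_iff_isUnit, RingHom.map_det, RingHom.mapMatrix_apply, Matrix.map_mul,
      hH₀, hB, det_one]
    exact one_ne_zero
  exact ⟨H₀ * (G * H₀)⁻¹, by rw [← Matrix.mul_assoc, mul_nonsing_inv _ hunit]⟩

theorem IsLocalRing.exists_mul_eq_one_of_linearIndependent_row {A m n : Type*} [CommRing A]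
    [IsLocalRing A] [IsArtinianRing A] [Fintype m] [DecidableEq m] [Fintype n] {G : Matrix m n A}
    (h : LinearIndependent A G.row) : ∃ H : Matrix n m A, G * H = 1 :=
  Matrix.exists_mul_eq_one_of_map_residue <|
    Matrix.exists_mul_eq_one_of_linearIndependent_row (linearIndependent_residue_comp h)

theorem IsLocalRing.nonempty_basis_ker_of_surjective {A M N : Type*} [CommRing A] [IsLocalRing A]
    [AddCommGroup M] [Module A M] [Module.Free A M] [Module.Finite A M]
    [AddCommGroup N] [Module A N] [Module.Free A N] {f : M →ₗ[A] N} (hf : Function.Surjective f) :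
    Nonempty (Basis (Fin (finrank A M - finrank A N)) A (LinearMap.ker f)) := by
  obtain ⟨s, hs⟩ := Module.projective_lifting_property f LinearMap.id hf
  obtain ⟨e, he⟩ :=
    (LinearMap.exact_subtype_ker_map f).splitSurjectiveEquiv Subtype.val_injective ⟨s, hs⟩
  set r := LinearMap.fst A _ N ∘ₗ e.toLinearMap
  have hr : r ∘ₗ (LinearMap.ker f).subtype = LinearMap.id := by
    rw [he.1]; ext; simp [r]
  have : Module.Projective A (LinearMap.ker f) := .of_split _ r hr
  have : Module.Finite A (LinearMap.ker f) :=
    .of_surjective r fun x ↦ ⟨x, LinearMap.congr_fun hr x⟩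
  have : Module.Free A (LinearMap.ker f) := free_of_flat_of_isLocalRing
  have : Module.Finite A N := .of_surjective f hf
  have hrank : finrank A M = finrank A (LinearMap.ker f) + finrank A N := by
    rw [e.finrank_eq, finrank_prod]
  exact ⟨finBasisOfFinrankEq A _ (by omega)⟩

theorem dualCode_span_eq_ker_mulVecLin {A ι κ : Type*} [CommRing A] [Fintype ι] (v : κ → ι → A) :
    dualCode (Submodule.span A (Set.range v)) = LinearMap.ker (Matrix.of v).mulVecLin := by
  ext y
  simp only [LinearMap.mem_ker, mulVecLin_apply, funext_iff, Pi.zero_apply]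
  refine ⟨fun hy i ↦ hy _ (Submodule.subset_span ⟨i, rfl⟩), fun hy x hx ↦ ?_⟩
  induction hx using Submodule.span_induction with
  | mem x hx => obtain ⟨i, rfl⟩ := hx; exact hy i
  | zero => simp
  | add x x' _ _ hx hx' => simp [add_mul, Finset.sum_add_distrib, hx, hx']
  | smul a x _ hx => simp [mul_assoc, ← Finset.mul_sum, hx]

/-- Over a finite local commutative ring `A`, the dual code of an
`(n,k)`-code `C` (a free submodule of `A^n` of rank `k`) is free of rank `n - k`. -/
theorem dualCode_free_of_rank_sub
    {A : Type*} [CommRing A] [Fintype A] [IsLocalRing A] {n k : ℕ}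
    (C : Submodule A (Fin n → A)) (bC : Module.Basis (Fin k) A C) :
    Nonempty (Module.Basis (Fin (n - k)) A (dualCode C)) := by
  classical
  set v : Fin k → Fin n → A := C.subtype ∘ bC
  have hC : Submodule.span A (Set.range v) = C := by
    rw [Set.range_comp, Submodule.span_image, bC.span_eq, Submodule.map_subtype_top]
  obtain ⟨H, hH⟩ := IsLocalRing.exists_mul_eq_one_of_linearIndependent_row (G := Matrix.of v)
    (bC.linearIndependent.map' C.subtype C.ker_subtype)
  obtain ⟨b⟩ := IsLocalRing.nonempty_basis_ker_of_surjective (f := (Matrix.of v).mulVecLin)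
    (mulVec_surjective_iff_exists_right_inverse.mpr ⟨H, hH⟩)
  rw [finrank_fin_fun, finrank_fin_fun] at b
  exact ⟨b.map (LinearEquiv.ofEq _ _ (hC ▸ dualCode_span_eq_ker_mulVecLin v).symm)⟩
end

section
/- Let A be a finite commutative ring, let C be a free submodule of A^n, and let x ∈ A^n. Then x ∈ C if and only if S(x) = 0, i.e., if and only if ⟨x,y⟩ = 0 for every y ∈ C^⊥. -/
/-! Over an Artinian ring every non-zero-divisor is a unit, so every maximal ideal `m` is an
associated prime, `m = ann a`, and `A ⧸ m` embeds into `A`. Passing to a simple quotient, every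
proper submodule of a finite module is therefore killed by a nonzero linear form. If the rows of
`M` are a basis of `C`, such a form vanishing on the range of `z ↦ M z` would be a linear relation
between the rows, so this map is onto and `M` has a right inverse `S`. Finally, `x ⊥ ker M`
forces `x = (x S) M`, a combination of the rows. -/

section

open Matrix

variable {R : Type*} [CommRing R]

theorem Ideal.IsMaximal.exists_eq_colon_singleton [IsArtinianRing R] {m : Ideal R}
    (hm : m.IsMaximal) : ∃ a : R, m = (⊥ : Ideal R).colon {a} := by
  have : IsFractionRing R R := IsFractionRing.self_iff_nonZeroDivisors_le_isUnit.mpr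
    fun _ ha => IsArtinianRing.isUnit_of_mem_nonZeroDivisors ha
  exact (isAssociatedPrime_iff.mp (Ideal.IsMaximal.mem_associatedPrimes_of_isFractionRing R m)).2

theorem IsSimpleModule.exists_injective_linearMap [IsArtinianRing R] (S : Type*)
    [AddCommGroup S] [Module R S] [IsSimpleModule R S] :
    ∃ g : S →ₗ[R] R, Function.Injective g := by
  obtain ⟨m, hm, ⟨e⟩⟩ := isSimpleModule_iff_quot_maximal.mp ‹IsSimpleModule R S›
  obtain ⟨a, ha⟩ := hm.exists_eq_colon_singleton
  have hker : m = LinearMap.ker (LinearMap.toSpanSingleton R R a) := by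
    ext r
    simp [ha, Submodule.mem_colon_singleton]
  exact ⟨m.liftQ _ hker.le ∘ₗ e.toLinearMap,
    (LinearMap.ker_eq_bot.mp (m.ker_liftQ_eq_bot' _ hker)).comp e.injective⟩

theorem Submodule.exists_dual_ne_zero_le_ker [IsArtinianRing R] {M : Type*} [AddCommGroup M]
    [Module R M] [Module.Finite R M] {N : Submodule R M} (hN : N ≠ ⊤) :
    ∃ φ : Module.Dual R M, φ ≠ 0 ∧ N ≤ LinearMap.ker φ := by
  obtain ⟨N', hN', hle⟩ := (eq_top_or_exists_le_coatom N).resolve_left hN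
  have := isSimpleModule_iff_isCoatom.mpr hN'
  obtain ⟨g, hg⟩ := IsSimpleModule.exists_injective_linearMap (R := R) (M ⧸ N')
  have hker : LinearMap.ker (g ∘ₗ N'.mkQ) = N' := by
    rw [LinearMap.ker_comp_of_ker_eq_bot _ (LinearMap.ker_eq_bot.mpr hg), ker_mkQ]
  exact ⟨g ∘ₗ N'.mkQ, fun h => hN'.1 (by rw [← hker, h, LinearMap.ker_zero]),
    hle.trans hker.ge⟩

variable {κ ι : Type*} [Fintype κ] [Fintype ι]

theorem Matrix.mulVec_surjective_of_linearIndependent_row [IsArtinianRing R]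
    {M : Matrix κ ι R} (hM : LinearIndependent R M.row) : Function.Surjective M.mulVec := by
  classical
  by_contra hsurj
  obtain ⟨φ, hφ, hle⟩ := Submodule.exists_dual_ne_zero_le_ker
    (N := LinearMap.range M.mulVecLin) (mt LinearMap.range_eq_top.mp hsurj)
  set c : κ → R := fun j => φ (Pi.single j 1)
  have hφc : ∀ w, φ w = c ⬝ᵥ w := fun w => by
    conv_lhs => rw [pi_eq_sum_univ' w]
    simp [dotProduct, c, mul_comm]
  have hc : c ᵥ* M = 0 := dotProduct_eq_zero _ fun z => by
    rw [← dotProduct_mulVec, ← hφc]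
    exact hle ⟨z, rfl⟩
  have hc0 : c = 0 := vecMul_injective_iff.mpr hM (hc.trans (zero_vecMul M).symm)
  exact hφ (LinearMap.ext fun w => by simp [hφc, hc0])

theorem Matrix.eq_vecMul_vecMul_of_mul_eq_one [DecidableEq κ] {M : Matrix κ ι R}
    {S : Matrix ι κ R} (hMS : M * S = 1) {x : ι → R} (hx : ∀ z, M *ᵥ z = 0 → x ⬝ᵥ z = 0) :
    x = (x ᵥ* S) ᵥ* M := by
  refine dotProduct_eq _ _ fun z => ?_
  have hker : M *ᵥ (z - S *ᵥ M *ᵥ z) = 0 := by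
    rw [mulVec_sub, mulVec_mulVec, hMS, one_mulVec, sub_self]
  calc x ⬝ᵥ z = x ⬝ᵥ (S *ᵥ M *ᵥ z) := by
        rw [← sub_eq_zero, ← dotProduct_sub]
        exact hx _ hker
    _ = ((x ᵥ* S) ᵥ* M) ⬝ᵥ z := by rw [dotProduct_mulVec, dotProduct_mulVec]

theorem mem_dualCode_span_row_iff (M : Matrix κ ι R) {y : ι → R} :
    y ∈ dualCode (Submodule.span R (Set.range M.row)) ↔ M *ᵥ y = 0 := by
  refine ⟨fun hy => funext fun j => hy _ (Submodule.subset_span ⟨j, rfl⟩), ?_⟩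
  rintro hy _ hx
  rw [← range_vecMulLinear] at hx
  obtain ⟨c, rfl⟩ := hx
  change (c ᵥ* M) ⬝ᵥ y = 0
  rw [← dotProduct_mulVec, hy, dotProduct_zero]

end

/-- Let `C` be a free submodule of `A^n` over a finite commutative
ring `A` and `x ∈ A^n`.  Then `x ∈ C` iff its syndrome vanishes, i.e. iff
`⟨x,y⟩ = 0` for every `y ∈ C^⊥`. -/
theorem mem_code_iff_syndrome_eq_zero
    {A : Type*} [CommRing A] [Fintype A] {n : ℕ}
    (C : Submodule A (Fin n → A)) (hC : Module.Free A C) (x : Fin n → A) :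
    x ∈ C ↔ ∀ y ∈ dualCode C, ∑ i, x i * y i = 0 := by
  classical
  refine ⟨fun hx y hy => hy x hx, fun hx => ?_⟩
  have : Module.Finite A C := Module.Finite.of_finite
  let b := Module.Free.chooseBasis A C
  let M : Matrix (Module.Free.ChooseBasisIndex A C) (Fin n) A := Matrix.of fun j => b j
  have hspan : C = Submodule.span A (Set.range M.row) := by
    change C = Submodule.span A (Set.range (C.subtype ∘ b))
    rw [Set.range_comp, Submodule.span_image, b.span_eq, Submodule.map_top,
      Submodule.range_subtype]
  have hM : LinearIndependent A M.row := b.linearIndependent.map' C.subtype C.ker_subtype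
  obtain ⟨S, hS⟩ := Matrix.mulVec_surjective_iff_exists_right_inverse.mp
    (Matrix.mulVec_surjective_of_linearIndependent_row hM)
  rw [hspan, ← range_vecMulLinear]
  refine ⟨Matrix.vecMul x S, (Matrix.eq_vecMul_vecMul_of_mul_eq_one hS fun z hz => ?_).symm⟩
  exact hx z (hspan ▸ (mem_dualCode_span_row_iff M).mpr hz)
end

section
/- Let A be a finite commutative ring, let C be a free submodule of A^n, and let x, y ∈ A^n. Then x and y have the same coset modulo C (i.e., x − y ∈ C) if and only if S(x) = S(y), i.e., if and only if ⟨x,z⟩ = ⟨y,z⟩ for every z ∈ C^⊥. -/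
open Module

section IsArtinianRing

variable {R M N : Type*} [CommRing R] [IsArtinianRing R]
  [AddCommGroup M] [Module R M] [AddCommGroup N] [Module R N]

theorem Ideal.IsMaximal.exists_injective_linearMap_quotient {I : Ideal R} (hI : I.IsMaximal) :
    ∃ f : R ⧸ I →ₗ[R] R, Function.Injective f := by
  have : IsFractionRing R R := IsFractionRing.self_iff_nonZeroDivisors_le_isUnit.mpr
    fun _ ha ↦ IsArtinianRing.isUnit_of_mem_nonZeroDivisors ha
  exact ((isAssociatedPrime_iff_exists_injective_linearMap I R).mp
    (Ideal.IsMaximal.mem_associatedPrimes_of_isFractionRing R I)).2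

theorem Submodule.dualAnnihilator_ne_bot_of_ne_top_s8 [Module.Finite R M] {U : Submodule R M}
    (hU : U ≠ ⊤) : U.dualAnnihilator ≠ ⊥ := by
  obtain ⟨W, hW, hUW⟩ := (eq_top_or_exists_le_coatom U).resolve_left hU
  have : IsSimpleModule R (M ⧸ W) := isSimpleModule_iff_isCoatom.mpr hW
  obtain ⟨I, hI, ⟨e⟩⟩ := isSimpleModule_iff_quot_maximal.mp this
  obtain ⟨g, hg⟩ := hI.exists_injective_linearMap_quotient
  obtain ⟨m, hm⟩ := SetLike.exists_not_mem_of_ne_top W hW.1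
  refine Submodule.ne_bot_iff _ |>.mpr ⟨g ∘ₗ e.toLinearMap ∘ₗ W.mkQ, ?_, ?_⟩
  · refine (Submodule.mem_dualAnnihilator _).mpr fun u hu ↦ ?_
    simp [(Submodule.Quotient.mk_eq_zero W).mpr (hUW hu)]
  · refine fun h ↦ hm ?_
    have : g (e (W.mkQ m)) = 0 := LinearMap.congr_fun h m
    rwa [map_eq_zero_iff g hg, map_eq_zero_iff e e.injective, Submodule.mkQ_apply,
      Submodule.Quotient.mk_eq_zero] at this

theorem IsArtinianRing.dualMap_surjective_of_injective [Projective R M] [Free R N]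
    [Module.Finite R N] {f : N →ₗ[R] M} (hf : Function.Injective f) : Function.Surjective f.dualMap := by
  by_contra hsurj
  obtain ⟨φ, hφ, hφ0⟩ := (Submodule.ne_bot_iff _).mp
    (Submodule.dualAnnihilator_ne_bot_of_ne_top_s8 (mt LinearMap.range_eq_top.mp hsurj))
  obtain ⟨c, rfl⟩ := (evalEquiv R N).surjective φ
  have hfc : f c = 0 := (forall_dual_apply_eq_zero_iff R (f c)).mp fun ψ ↦
    (Submodule.mem_dualAnnihilator _).mp hφ (f.dualMap ψ) (LinearMap.mem_range_self _ ψ)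
  exact hφ0 (by rw [(map_eq_zero_iff f hf).mp hfc, map_zero])

end IsArtinianRing

theorem LinearMap.exists_leftInverse_of_dualMap_surjective_s8 {R M N : Type*} [CommSemiring R]
    [AddCommMonoid M] [Module R M] [AddCommMonoid N] [Module R N] [Free R N] [Module.Finite R N]
    {f : N →ₗ[R] M} (hf : Function.Surjective f.dualMap) :
    ∃ g : M →ₗ[R] N, g ∘ₗ f = LinearMap.id := by
  let b := Free.chooseBasis R N
  choose h hh using fun i ↦ hf (b.coord i)
  refine ⟨∑ i, (h i).smulRight (b i), LinearMap.ext fun c ↦ ?_⟩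
  conv_rhs => rw [← b.sum_repr c]
  simp [← LinearMap.dualMap_apply, hh]

theorem Submodule.dualAnnihilator_dualCoannihilator_eq_of_free_s8 {R M : Type*} [CommRing R]
    [IsArtinianRing R] [AddCommGroup M] [Module R M] [Projective R M] (W : Submodule R M)
    [Free R W] [Module.Finite R W] : W.dualAnnihilator.dualCoannihilator = W := by
  refine le_antisymm (fun w hw ↦ ?_) W.le_dualAnnihilator_dualCoannihilator
  obtain ⟨π, hπ⟩ := LinearMap.exists_leftInverse_of_dualMap_surjective_s8
    (IsArtinianRing.dualMap_surjective_of_injective W.injective_subtype)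
  have hπW (v : W) : π v = v := LinearMap.congr_fun hπ v
  suffices w - π w = 0 from sub_eq_zero.mp this ▸ (π w).2
  refine (forall_dual_apply_eq_zero_iff R _).mp fun φ ↦ ?_
  have hφ : φ - φ ∘ₗ W.subtype ∘ₗ π ∈ W.dualAnnihilator :=
    (Submodule.mem_dualAnnihilator _).mpr fun v hv ↦ by simp [hπW ⟨v, hv⟩]
  simpa [sub_eq_zero] using (Submodule.mem_dualCoannihilator _).mp hw _ hφ

theorem mem_dualCode_iff {R ι : Type*} [CommRing R] [Fintype ι] [DecidableEq ι]
    {C : Submodule R (ι → R)} {y : ι → R} :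
    y ∈ dualCode C ↔ dotProductEquiv R ι y ∈ C.dualAnnihilator := by
  simp only [Submodule.mem_dualAnnihilator, dotProductEquiv_apply_apply, dotProduct_comm y]
  rfl

theorem dualCode_dualCode_of_free {R ι : Type*} [CommRing R] [IsArtinianRing R] [Fintype ι]
    (C : Submodule R (ι → R)) [Free R C] : dualCode (dualCode C) = C := by
  classical
  conv_rhs => rw [← C.dualAnnihilator_dualCoannihilator_eq_of_free_s8]
  ext x
  rw [Submodule.mem_dualCoannihilator, ← (dotProductEquiv R ι).toEquiv.forall_congr_right]
  simp only [LinearEquiv.coe_toEquiv, ← mem_dualCode_iff, dotProductEquiv_apply_apply]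
  rfl

/-- Let `C` be a free submodule of `A^n` over a finite commutative
ring `A` and `x, y ∈ A^n`.  Then `x` and `y` lie in the same coset modulo `C`
iff they have the same syndrome, i.e. iff `⟨x,z⟩ = ⟨y,z⟩` for every `z ∈ C^⊥`. -/
theorem sub_mem_code_iff_syndrome_eq
    {A : Type*} [CommRing A] [Fintype A] {n : ℕ}
    (C : Submodule A (Fin n → A)) (hC : Module.Free A C) (x y : Fin n → A) :
    x - y ∈ C ↔ ∀ z ∈ dualCode C, ∑ i, x i * z i = ∑ i, y i * z i := by
  have := hC
  conv_lhs => rw [← dualCode_dualCode_of_free C]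
  refine forall₂_congr fun z _ ↦ ?_
  rw [← sub_eq_zero (a := ∑ i, x i * z i), ← Finset.sum_sub_distrib]
  simp only [Pi.sub_apply, mul_comm (z _), sub_mul]
end

section
/- Let A be a finite local commutative ring, let C be a free submodule of A^n of rank k with generator matrix G ∈ M_{k,n}(A) (the rows of G form a basis of C), and let H ∈ M_{n−k,n}(A). Then H is a control matrix of C (i.e., the rows of H form a basis of C^⊥) if and only if G·Hᵗ = 0 and the row vectors of H are linearly independent over A. -/
/-!
The heart of the matter is that `x ↦ G x : Aⁿ → Aᵏ` is surjective once the rows of `G` are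
linearly independent. Over an Artinian local ring `A` the maximal ideal `𝔪` is an associated
prime, so the residue field `κ` embeds `A`-linearly into `A`; applying this embedding
coordinatewise turns a linear relation between the rows of `G` mod `𝔪` into one over `A`. So the
reduction of `G` has independent rows, hence a right inverse over `κ`, and any lift `B` of it
makes `G B` invertible (its determinant is a unit mod `𝔪`): `G` has a right inverse over `A`.

Since `C^⊥` is the kernel of this surjection, `|C^⊥| = |A|ⁿ⁻ᵏ` when `A` is finite. If `G Hᵗ = 0`,
the span of the rows of `H` lies in `C^⊥`, and it has `|A|ⁿ⁻ᵏ` elements when these rows are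
independent, so they span `C^⊥`.
-/

open IsLocalRing Matrix

theorem IsLocalRing.exists_injective_residueField_linearMap {A : Type*} [CommRing A]
    [IsLocalRing A] [IsArtinianRing A] :
    ∃ f : ResidueField A →ₗ[A] A, Function.Injective f := by
  obtain ⟨P, hP⟩ := associatedPrimes.nonempty A A
  have : P.IsPrime := hP.isPrime
  rw [AssociatedPrimes.mem_iff, eq_maximalIdeal (IsArtinianRing.isMaximal_of_isPrime P),
    isAssociatedPrime_iff_exists_injective_linearMap] at hP
  exact hP.2

theorem Matrix.vecMul_map_algebraMap_injective {R K : Type*} [CommRing R] [CommRing K]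
    [Algebra R K] {m n : Type*} [Fintype m] {f : K →ₗ[R] R} (hf : Function.Injective f)
    {M : Matrix m n R} (hM : Function.Injective M.vecMul) :
    Function.Injective (M.map (algebraMap R K)).vecMul := by
  have hcomm (v : m → K) : f ∘ (v ᵥ* M.map (algebraMap R K)) = (f ∘ v) ᵥ* M := by
    ext i
    simp only [Function.comp_apply, vecMul, dotProduct, map_sum, map_apply]
    refine Finset.sum_congr rfl fun j _ => ?_
    rw [mul_comm, ← Algebra.smul_def, map_smul, smul_eq_mul, mul_comm]
  intro v w (hvw : v ᵥ* _ = w ᵥ* _)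
  have := hM (show (f ∘ v) ᵥ* M = (f ∘ w) ᵥ* M by rw [← hcomm, ← hcomm, hvw])
  exact funext fun j => hf (congrFun this j)

theorem Matrix.mulVec_surjective_of_vecMul_injective {K : Type*} [Field K] {m n : Type*}
    [Fintype m] [Fintype n] {M : Matrix m n K} (hM : Function.Injective M.vecMul) :
    Function.Surjective M.mulVec := by
  have hrank : Module.finrank K (LinearMap.range M.mulVecLin) = Module.finrank K (m → K) := by
    rw [← Matrix.rank, (vecMul_injective_iff.mp hM).rank_matrix,
      Module.finrank_fintype_fun_eq_card]
  intro y
  obtain ⟨x, hx⟩ := (Submodule.eq_top_of_finrank_eq hrank).ge (Submodule.mem_top (x := y))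
  exact ⟨x, hx⟩

section LocalRing

variable {A : Type*} [CommRing A] [IsLocalRing A] {m n : Type*} [Fintype m] [DecidableEq m]

theorem Matrix.isUnit_of_isUnit_map_residue {M : Matrix m m A}
    (h : IsUnit (M.map (residue A))) : IsUnit M := by
  rw [isUnit_iff_isUnit_det] at h ⊢
  exact isUnit_of_map_unit (residue A) _ (by rwa [RingHom.map_det])

theorem Matrix.mulVec_surjective_of_mulVec_map_residue_surjective [Fintype n]
    {M : Matrix m n A} (h : Function.Surjective (M.map (residue A)).mulVec) :
    Function.Surjective M.mulVec := by
  obtain ⟨B, hB⟩ := mulVec_surjective_iff_exists_right_inverse.mp h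
  obtain ⟨B', rfl⟩ : ∃ B' : Matrix n m A, B'.map (residue A) = B :=
    ⟨B.map (Function.surjInv residue_surjective), by ext; simp [Function.surjInv_eq]⟩
  have hunit : IsUnit (M * B') :=
    isUnit_of_isUnit_map_residue (by rw [Matrix.map_mul, hB]; exact isUnit_one)
  refine mulVec_surjective_iff_exists_right_inverse.mpr ⟨B' * (M * B')⁻¹, ?_⟩
  rw [← Matrix.mul_assoc, mul_nonsing_inv _ ((isUnit_iff_isUnit_det _).mp hunit)]

theorem IsLocalRing.mulVec_surjective_of_vecMul_injective [IsArtinianRing A] [Fintype n]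
    {M : Matrix m n A} (hM : Function.Injective M.vecMul) : Function.Surjective M.mulVec := by
  obtain ⟨f, hf⟩ := exists_injective_residueField_linearMap (A := A)
  apply mulVec_surjective_of_mulVec_map_residue_surjective
  apply Matrix.mulVec_surjective_of_vecMul_injective
  rw [← ResidueField.algebraMap_eq]
  exact vecMul_map_algebraMap_injective hf hM

end LocalRing

theorem Module.Basis.span_range_coe {R M ι : Type*} [Semiring R] [AddCommMonoid M] [Module R M]
    {S : Submodule R M} (b : Module.Basis ι R S) :
    Submodule.span R (Set.range fun i => (b i : M)) = S := by
  change Submodule.span R (Set.range (S.subtype ∘ b)) = S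
  rw [Set.range_comp, Submodule.span_image, b.span_eq, Submodule.map_subtype_top]

theorem Module.Basis.linearIndependent_coe {R M ι : Type*} [Ring R] [AddCommGroup M] [Module R M]
    {S : Submodule R M} (b : Module.Basis ι R S) :
    LinearIndependent R fun i => (b i : M) :=
  b.linearIndependent.map' S.subtype S.ker_subtype

theorem Submodule.eq_of_le_of_card_ge {R M : Type*} [Ring R] [AddCommGroup M] [Module R M]
    {S T : Submodule R M} [Finite T] (hle : S ≤ T) (hcard : Nat.card T ≤ Nat.card S) : S = T :=
  toAddSubgroup_injective (AddSubgroup.eq_of_le_of_card_ge hle hcard)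

theorem LinearIndependent.card_span_range {A M ι : Type*} [CommRing A] [AddCommGroup M]
    [Module A M] [Fintype ι] {v : ι → M} (hv : LinearIndependent A v) :
    Nat.card (Submodule.span A (Set.range v)) = Nat.card A ^ Fintype.card ι := by
  rw [Nat.card_congr (Module.Basis.span hv).equivFun.toEquiv, Nat.card_fun,
    Nat.card_eq_fintype_card (α := ι)]

theorem LinearMap.card_ker_of_surjective {A : Type*} [CommRing A] [Nontrivial A] [Finite A]
    {n k : ℕ} {f : (Fin n → A) →ₗ[A] (Fin k → A)} (hf : Function.Surjective f) :
    Nat.card (LinearMap.ker f) = Nat.card A ^ (n - k) := by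
  have hcard := (LinearMap.ker f).card_eq_card_quotient_mul_card
  rw [Nat.card_congr (f.quotKerEquivOfSurjective hf).toEquiv] at hcard
  have hkn : k ≤ n := by
    have := Nat.card_le_card_of_surjective f hf
    simp only [Nat.card_fun, Nat.card_eq_fintype_card, Fintype.card_fin] at this
    exact (Nat.pow_le_pow_iff_right Finite.one_lt_card).mp this
  simp only [Nat.card_fun, Nat.card_eq_fintype_card (α := Fin _), Fintype.card_fin] at hcard
  rw [show Nat.card A ^ n = Nat.card A ^ (n - k) * Nat.card A ^ k by
    rw [← pow_add, Nat.sub_add_cancel hkn]] at hcard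
  exact (Nat.eq_of_mul_eq_mul_right (pow_pos Nat.card_pos k) hcard).symm

section DualCode

variable {A : Type*} [CommRing A] {ι : Type*} [Fintype ι]

theorem mem_dualCode_span_iff {s : Set (ι → A)} {y : ι → A} :
    y ∈ dualCode (Submodule.span A s) ↔ ∀ x ∈ s, x ⬝ᵥ y = 0 := by
  refine ⟨fun hy x hx => hy x (Submodule.subset_span hx), fun hy x hx => ?_⟩
  change x ⬝ᵥ y = 0
  induction hx using Submodule.span_induction with
  | mem x hx => exact hy x hx
  | zero => exact zero_dotProduct y
  | add x x' _ _ hx hx' => rw [add_dotProduct, hx, hx', add_zero]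
  | smul c x _ hx => rw [smul_dotProduct, hx, smul_zero]

theorem dualCode_span_range_row {κ : Type*} [Fintype κ] (G : Matrix κ ι A) :
    dualCode (Submodule.span A (Set.range G.row)) = LinearMap.ker G.mulVecLin := by
  ext y
  simp only [mem_dualCode_span_iff, Set.forall_mem_range, LinearMap.mem_ker, mulVecLin_apply,
    funext_iff, mulVec, Pi.zero_apply]
  rfl

end DualCode

/-- Over a finite local commutative ring `A`, let `C` be an
`(n,k)`-code with generator matrix `G` (its rows form a basis of `C`) and let
`H ∈ M_{n-k,n}(A)`.  Then `H` is a control matrix of `C` (its rows form a basis of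
`C^⊥`) iff `G·Hᵗ = 0` and the rows of `H` are linearly independent. -/
theorem control_matrix_iff
    {A : Type*} [CommRing A] [Fintype A] [IsLocalRing A] {n k : ℕ}
    (C : Submodule A (Fin n → A)) (G : Matrix (Fin k) (Fin n) A)
    (bG : Module.Basis (Fin k) A C) (hG : ∀ i, (bG i : Fin n → A) = G i)
    (H : Matrix (Fin (n - k)) (Fin n) A) :
    (∃ bH : Module.Basis (Fin (n - k)) A (dualCode C), ∀ i, (bH i : Fin n → A) = H i) ↔
      G * H.transpose = 0 ∧ LinearIndependent A (fun i : Fin (n - k) => H i) := by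
  have hGrows : (fun i => (bG i : Fin n → A)) = G.row := funext hG
  constructor
  · rintro ⟨bH, hbH⟩
    refine ⟨?_, funext hbH ▸ bH.linearIndependent_coe⟩
    ext j i
    simpa [hG, hbH, mul_apply, dotProduct] using (bH i).2 (bG j) (bG j).2
  · rintro ⟨hGH, hH⟩
    have hker : dualCode C = LinearMap.ker G.mulVecLin := by
      rw [← dualCode_span_range_row, ← hGrows, bG.span_range_coe]
    have hsurj : Function.Surjective G.mulVecLin :=
      IsLocalRing.mulVec_surjective_of_vecMul_injective
        (vecMul_injective_iff.mpr (hGrows ▸ bG.linearIndependent_coe))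
    have hle : Submodule.span A (Set.range fun i => H i) ≤ dualCode C := by
      rw [hker, Submodule.span_le]
      rintro _ ⟨i, rfl⟩
      ext j
      simpa [mul_apply, mulVec, dotProduct] using congrFun (congrFun hGH j) i
    have hspan : Submodule.span A (Set.range fun i => H i) = dualCode C :=
      Submodule.eq_of_le_of_card_ge hle <| by
        rw [hker, LinearMap.card_ker_of_surjective hsurj, hH.card_span_range, Fintype.card_fin]
    exact ⟨(Module.Basis.span hH).map (LinearEquiv.ofEq _ _ hspan), fun i => by simp⟩
end
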